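/- Let μ be a Radon measure of n-polynomial growth on ℝ^d, and fix balls B_R ⊂ B_Q, cubes T ⊂ S with: r(B_Q) comparable to ℓ(S) and B_Q ∩ S ≠ ∅; ℓ(T) comparable to r(B_R) and T ∩ B_R ≠ ∅; and T ⊂ S. Then δ(B_R, B_Q) ≤ C(1 + δ(T,S)), where δ(A,B) = 1 + ∫_{cB \ cA} |x_A − y|^{−n} dμ (for a fixed dilation constant c ≥ 2) and C depends only on the comparability constants, n, d, c. -/

import Mathlib

open MeasureTheory Metric
open scoped ENNReal

/-- The axis-parallel closed cube with center `c` and side length `ℓ`. -/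
def cube {d : ℕ} (c : EuclideanSpace ℝ (Fin d)) (ℓ : ℝ) : Set (EuclideanSpace ℝ (Fin d)) :=
  {y | ∀ i, |y i - c i| ≤ ℓ / 2}

/-- `δ(A,B) = 1 + ∫_{cB \ cA} |x_A − y|^{−n} dμ(y)` for balls `A ⊆ B`, with dilation
constant `c`. -/
noncomputable def ballDelta {d : ℕ} (μ : Measure (EuclideanSpace ℝ (Fin d))) (n c : ℝ)
    (xA : EuclideanSpace ℝ (Fin d)) (rA : ℝ)
    (xB : EuclideanSpace ℝ (Fin d)) (rB : ℝ) : ℝ≥0∞ :=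
  1 + ∫⁻ y in closedBall xB (c * rB) \ closedBall xA (c * rA),
        ENNReal.ofReal (1 / dist xA y ^ n) ∂μ

/-- `δ(T,S) = 1 + ∫_{cS \ cT} |x_T − y|^{−n} dμ(y)` for cubes `T ⊆ S`, with dilation
constant `c`. -/
noncomputable def cubeDelta {d : ℕ} (μ : Measure (EuclideanSpace ℝ (Fin d))) (n c : ℝ)
    (cT : EuclideanSpace ℝ (Fin d)) (ℓT : ℝ)
    (cS : EuclideanSpace ℝ (Fin d)) (ℓS : ℝ) : ℝ≥0∞ :=
  1 + ∫⁻ y in cube cS (c * ℓS) \ cube cT (c * ℓT),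
        ENNReal.ofReal (1 / dist cT y ^ n) ∂μ


/-
Write `M r_R` for the radius of a ball around `x_R` containing `c·T`, where `M` depends only on
`d`, `c`, `κ`, and split the integral defining `δ(B_R, B_Q)` by this ball and by `c·S`.
Inside the ball `|x_R - y| > c r_R`, and outside `c·S` one has `|x_R - y| ≳ ℓ(S) ≈ r(B_Q)`;
in both regions the integrand is at most a constant times the inverse `n`-th power of the radius
of a ball around `x_R` containing the region, so the growth condition at `x_R` bounds these
parts by constants. The remaining points lie in `c·S \ c·T` and outside the ball, so `x_T` is
closer to `x_R` than `y` is; then `|x_R - y|^{-n} ≤ 2^n |x_T - y|^{-n}`, and that part is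
controlled by `δ(T, S)`.
-/

section GrowthIntegral

variable {X : Type*} [PseudoMetricSpace X] [MeasurableSpace X] {μ : Measure X} {n : ℝ}

lemma setLIntegral_inv_dist_rpow_le_of_subset_ball {x : X} {A : Set X} {ρ K : ℝ} (hn : 0 ≤ n)
    (hμ : ∀ r > 0, μ (ball x r) ≤ ENNReal.ofReal (r ^ n)) (hA : A ⊆ ball x ρ)
    (hfar : ∀ y ∈ A, ρ ≤ K * dist x y) :
    ∫⁻ y in A, ENNReal.ofReal (1 / dist x y ^ n) ∂μ ≤ ENNReal.ofReal (K ^ n) := by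
  rcases le_or_gt ρ 0 with hρ | hρ
  · simp [Set.subset_empty_iff.1 (hA.trans (ball_eq_empty.2 hρ).subset)]
  have hpointwise :
      ∀ y ∈ A, ENNReal.ofReal (1 / dist x y ^ n) ≤ ENNReal.ofReal (K ^ n / ρ ^ n) := by
    intro y hy
    have hKd : 0 < K * dist x y := hρ.trans_le (hfar y hy)
    have hK : 0 < K := pos_of_mul_pos_left hKd dist_nonneg
    have hd : 0 < dist x y := pos_of_mul_pos_right hKd hK.le
    refine ENNReal.ofReal_le_ofReal ?_
    rw [div_le_div_iff₀ (by positivity) (by positivity), one_mul, ← Real.mul_rpow hK.le hd.le]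
    exact Real.rpow_le_rpow hρ.le (hfar y hy) hn
  calc ∫⁻ y in A, ENNReal.ofReal (1 / dist x y ^ n) ∂μ
      ≤ ∫⁻ _ in A, ENNReal.ofReal (K ^ n / ρ ^ n) ∂μ :=
        setLIntegral_mono measurable_const hpointwise
    _ = ENNReal.ofReal (K ^ n / ρ ^ n) * μ A := setLIntegral_const _ _
    _ ≤ ENNReal.ofReal (K ^ n / ρ ^ n) * ENNReal.ofReal (ρ ^ n) := by
        gcongr
        exact (measure_mono hA).trans (hμ ρ hρ)
    _ = ENNReal.ofReal (K ^ n) := by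
        rw [← ENNReal.ofReal_mul' (by positivity), div_mul_cancel₀ _ (by positivity)]

lemma setLIntegral_inv_dist_rpow_closedBall_diff_le {x : X} {s t : ℝ} (hn : 0 ≤ n)
    (hμ : ∀ r > 0, μ (ball x r) ≤ ENNReal.ofReal (r ^ n)) (ht : 0 < t) :
    ∫⁻ y in closedBall x s \ closedBall x t, ENNReal.ofReal (1 / dist x y ^ n) ∂μ ≤
      ENNReal.ofReal ((2 * s / t) ^ n) := by
  have hdist : ∀ y ∈ closedBall x s \ closedBall x t, t < dist x y ∧ dist x y ≤ s := by
    rintro y ⟨hys, hyt⟩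
    rw [mem_closedBall, dist_comm] at hys hyt
    exact ⟨not_le.1 hyt, hys⟩
  refine setLIntegral_inv_dist_rpow_le_of_subset_ball hn hμ (ρ := 2 * s) (fun y hy => ?_)
    (fun y hy => ?_)
  · obtain ⟨hty, hys⟩ := hdist y hy
    rw [mem_ball, dist_comm]
    linarith
  · obtain ⟨hty, hys⟩ := hdist y hy
    calc 2 * s = 2 * s / t * t := (div_mul_cancel₀ _ ht.ne').symm
      _ ≤ 2 * s / t * dist x y := by
        gcongr
        exact div_nonneg (by linarith) ht.le

variable [OpensMeasurableSpace X]

lemma setLIntegral_inv_dist_rpow_le_two_rpow_mul {x x' : X} {A : Set X} (hn : 0 ≤ n)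
    (hA : ∀ y ∈ A, dist x' x < dist x y) :
    ∫⁻ y in A, ENNReal.ofReal (1 / dist x y ^ n) ∂μ ≤
      ENNReal.ofReal (2 ^ n) * ∫⁻ y in A, ENNReal.ofReal (1 / dist x' y ^ n) ∂μ := by
  rw [← lintegral_const_mul' _ _ ENNReal.ofReal_ne_top]
  refine setLIntegral_mono (by fun_prop) fun y hy => ?_
  have hx'y : dist x' y ≤ 2 * dist x y := by
    linarith [dist_triangle x' x y, hA y hy]
  have hxy_pos : 0 < dist x y := dist_nonneg.trans_lt (hA y hy)
  have hx'y_pos : 0 < dist x' y := by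
    linarith [dist_triangle x x' y, dist_comm x x', hA y hy]
  rw [← ENNReal.ofReal_mul (by positivity), mul_one_div]
  refine ENNReal.ofReal_le_ofReal ?_
  rw [div_le_div_iff₀ (by positivity) (by positivity), one_mul,
    ← Real.mul_rpow zero_le_two (by positivity)]
  exact Real.rpow_le_rpow hx'y_pos.le hx'y hn

end GrowthIntegral

section Cube

variable {d : ℕ}

lemma center_mem_cube (c : EuclideanSpace ℝ (Fin d)) {ℓ : ℝ} (hℓ : 0 ≤ ℓ) : c ∈ cube c ℓ :=
  fun i => by simpa using div_nonneg hℓ zero_le_two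

lemma dist_le_of_mem_cube {c y : EuclideanSpace ℝ (Fin d)} {ℓ : ℝ} (hℓ : 0 ≤ ℓ)
    (hy : y ∈ cube c ℓ) : dist y c ≤ √d * (ℓ / 2) := by
  have hsum : ∑ i, dist (y i) (c i) ^ 2 ≤ d * (ℓ / 2) ^ 2 := by
    calc ∑ i, dist (y i) (c i) ^ 2 ≤ ∑ _i : Fin d, (ℓ / 2) ^ 2 :=
          Finset.sum_le_sum fun i _ => pow_le_pow_left₀ dist_nonneg (hy i) 2
      _ = d * (ℓ / 2) ^ 2 := by simp
  rw [EuclideanSpace.dist_eq, ← Real.sqrt_sq (by positivity : 0 ≤ ℓ / 2),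
    ← Real.sqrt_mul' _ (sq_nonneg _)]
  exact Real.sqrt_le_sqrt hsum

lemma dist_le_of_cube_inter_closedBall_nonempty {c x : EuclideanSpace ℝ (Fin d)} {ℓ r : ℝ}
    (hℓ : 0 ≤ ℓ) (h : (cube c ℓ ∩ closedBall x r).Nonempty) : dist c x ≤ √d * (ℓ / 2) + r := by
  obtain ⟨z, hzc, hzx⟩ := h
  calc dist c x ≤ dist z c + dist z x := dist_triangle_left _ _ _
    _ ≤ √d * (ℓ / 2) + r := add_le_add (dist_le_of_mem_cube hℓ hzc) hzx

lemma sub_lt_dist_of_mem_cube_of_notMem_cube {c p y : EuclideanSpace ℝ (Fin d)} {ℓ ℓ' : ℝ}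
    (hp : p ∈ cube c ℓ) (hy : y ∉ cube c ℓ') : ℓ' / 2 - ℓ / 2 < dist p y := by
  obtain ⟨i, hi⟩ : ∃ i, ℓ' / 2 < |y i - c i| := by simpa [cube] using hy
  have hyc : |y i - c i| ≤ |y i - p i| + |p i - c i| := abs_sub_le _ _ _
  have hyp : |y i - p i| ≤ dist p y := by
    rw [abs_sub_comm, ← Real.dist_eq]
    exact PiLp.dist_apply_le p y i
  linarith [hp i]

end Cube

lemma ENNReal.one_add_add_add_mul_le {a b e J : ℝ≥0∞} :
    1 + (a + e * J + b) ≤ (1 + a + b + e) * (1 + J) :=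
  calc 1 + (a + e * J + b) = (1 + a + b) + e * J := by ring
    _ ≤ (1 + a + b + e) + (1 + a + b + e) * J :=
        add_le_add le_self_add (by gcongr; exact le_add_self)
    _ = (1 + a + b + e) * (1 + J) := by ring

noncomputable def dilatedCubeRatio (d : ℕ) (c κ : ℝ) : ℝ := √d * c * κ + 1

noncomputable def ballCubeConst (d : ℕ) (n c κ : ℝ) : ℝ≥0∞ :=
  1 + ENNReal.ofReal ((2 * dilatedCubeRatio d c κ / c) ^ n) +
    ENNReal.ofReal ((4 * κ * (dilatedCubeRatio d c κ + 1) * (c + 1)) ^ n) +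
    ENNReal.ofReal (2 ^ n)

section Configuration

variable {d : ℕ} {μ : Measure (EuclideanSpace ℝ (Fin d))} {n c κ : ℝ}
  {xR xQ cT cS : EuclideanSpace ℝ (Fin d)} {rR rQ ℓT ℓS : ℝ}

lemma dist_le_of_mem_dilate_cube (hc : 1 ≤ c) (hℓT : 0 ≤ ℓT) (hT : ℓT ≤ κ * rR)
    (hTR : (cube cT ℓT ∩ closedBall xR rR).Nonempty) {y : EuclideanSpace ℝ (Fin d)}
    (hy : y ∈ cube cT (c * ℓT)) : dist xR y ≤ dilatedCubeRatio d c κ * rR := by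
  have hsd : 0 ≤ √d := Real.sqrt_nonneg d
  have hℓ : √d * ℓT ≤ √d * (c * ℓT) := by nlinarith [mul_le_mul_of_nonneg_left hc hℓT]
  have hℓκ : √d * (c * ℓT) ≤ √d * c * κ * rR := by
    nlinarith [mul_le_mul_of_nonneg_left hT (by positivity : 0 ≤ √d * c)]
  calc dist xR y ≤ dist cT xR + dist y cT := by
        rw [dist_comm cT xR, dist_comm y cT]; exact dist_triangle _ _ _
    _ ≤ (√d * (ℓT / 2) + rR) + √d * (c * ℓT / 2) :=
        add_le_add (dist_le_of_cube_inter_closedBall_nonempty hℓT hTR)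
          (dist_le_of_mem_cube (by positivity) hy)
    _ ≤ dilatedCubeRatio d c κ * rR := by rw [dilatedCubeRatio]; linarith

lemma le_mul_dist_of_notMem_dilate_cube {x p y : EuclideanSpace ℝ (Fin d)} {B r : ℝ}
    (hc : 2 ≤ c) (hκ : 0 < κ) (hℓS : 0 ≤ ℓS) (hS : rQ / κ ≤ ℓS) (hp : p ∈ cube cS ℓS)
    (hB : 0 ≤ B) (hpx : dist p x ≤ B * r) (hr : r ≤ dist x y) (hy : y ∉ cube cS (c * ℓS)) :
    rQ ≤ 2 * κ * (B + 1) * dist x y := by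
  have hpy := sub_lt_dist_of_mem_cube_of_notMem_cube hp hy
  have hℓS_le : ℓS ≤ 2 * (B + 1) * dist x y := by
    nlinarith [dist_triangle p x y, mul_nonneg (by linarith : 0 ≤ c - 2) hℓS,
      mul_le_mul_of_nonneg_left hr hB]
  rw [div_le_iff₀ hκ] at hS
  nlinarith [mul_le_mul_of_nonneg_left hℓS_le hκ.le]

lemma setLIntegral_closedBall_diff_diff_dilate_cube_le {x p : EuclideanSpace ℝ (Fin d)}
    {B r : ℝ} (hn : 0 ≤ n) (hc : 2 ≤ c) (hκ : 0 < κ)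
    (hμ : ∀ r > 0, μ (ball x r) ≤ ENNReal.ofReal (r ^ n)) (hr : 0 < r) (hxQ : dist x xQ ≤ rQ)
    (hS : rQ / κ ≤ ℓS) (hp : p ∈ cube cS ℓS) (hB : 0 ≤ B) (hpx : dist p x ≤ B * r) :
    ∫⁻ y in (closedBall xQ (c * rQ) \ closedBall x (c * r)) \ cube cS (c * ℓS),
        ENNReal.ofReal (1 / dist x y ^ n) ∂μ ≤
      ENNReal.ofReal ((4 * κ * (B + 1) * (c + 1)) ^ n) := by
  have hℓS : 0 ≤ ℓS := (div_nonneg (dist_nonneg.trans hxQ) hκ.le).trans hS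
  have hdist : ∀ y ∈ closedBall xQ (c * rQ) \ closedBall x (c * r),
      c * r < dist x y ∧ dist x y ≤ (c + 1) * rQ := by
    rintro y ⟨hyQ, hyx⟩
    rw [mem_closedBall, dist_comm] at hyx
    exact ⟨not_le.1 hyx, by linarith [dist_triangle_right x y xQ, mem_closedBall.1 hyQ]⟩
  refine setLIntegral_inv_dist_rpow_le_of_subset_ball hn hμ (ρ := 2 * (c + 1) * rQ)
    (fun y hy => ?_) (fun y hy => ?_) <;> obtain ⟨hcr, hyQ⟩ := hdist y hy.1
  · rw [mem_ball, dist_comm]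
    nlinarith
  · have hrQ := le_mul_dist_of_notMem_dilate_cube hc hκ hℓS hS hp hB hpx (by nlinarith) hy.2
    calc 2 * (c + 1) * rQ ≤ 2 * (c + 1) * (2 * κ * (B + 1) * dist x y) := by gcongr
      _ = 4 * κ * (B + 1) * (c + 1) * dist x y := by ring

lemma ballDelta_le_ballCubeConst_mul_cubeDelta (hn : 0 ≤ n) (hc : 2 ≤ c) (hκ : 0 < κ)
    (hμ : ∀ r > 0, μ (ball xR r) ≤ ENNReal.ofReal (r ^ n)) (hrR : 0 < rR)
    (hRQ : closedBall xR rR ⊆ closedBall xQ rQ) (hS : rQ / κ ≤ ℓS)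
    (hT₁ : rR / κ ≤ ℓT) (hT₂ : ℓT ≤ κ * rR)
    (hTR : (cube cT ℓT ∩ closedBall xR rR).Nonempty) (hTS : cube cT ℓT ⊆ cube cS ℓS) :
    ballDelta μ n c xR rR xQ rQ ≤ ballCubeConst d n c κ * cubeDelta μ n c cT ℓT cS ℓS := by
  set M := dilatedCubeRatio d c κ
  set D := closedBall xQ (c * rQ) \ closedBall xR (c * rR)
  set near := closedBall xR (M * rR) \ closedBall xR (c * rR)
  set mid := (cube cS (c * ℓS) \ cube cT (c * ℓT)) \ closedBall xR (M * rR)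
  set J := ∫⁻ y in cube cS (c * ℓS) \ cube cT (c * ℓT), ENNReal.ofReal (1 / dist cT y ^ n) ∂μ
  have hℓT : 0 < ℓT := (div_pos hrR hκ).trans_le hT₁
  have hM : 0 ≤ M := by unfold M dilatedCubeRatio; positivity
  have hfarT : ∀ y, M * rR < dist xR y → y ∉ cube cT (c * ℓT) := fun y hy hyT =>
    hy.not_ge (dist_le_of_mem_dilate_cube (by linarith) hℓT.le hT₂ hTR hyT)
  have hcT : dist cT xR ≤ M * rR := dist_comm xR cT ▸
    dist_le_of_mem_dilate_cube (by linarith) hℓT.le hT₂ hTR (center_mem_cube cT (by positivity))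
  have hnear : ∫⁻ y in near, ENNReal.ofReal (1 / dist xR y ^ n) ∂μ ≤
      ENNReal.ofReal ((2 * M / c) ^ n) := by
    have h := setLIntegral_inv_dist_rpow_closedBall_diff_le hn hμ (s := M * rR)
      (by positivity : 0 < c * rR)
    rwa [← mul_assoc, mul_div_mul_right _ _ hrR.ne'] at h
  have hmid : ∫⁻ y in mid, ENNReal.ofReal (1 / dist xR y ^ n) ∂μ ≤
      ENNReal.ofReal (2 ^ n) * J := by
    refine (setLIntegral_inv_dist_rpow_le_two_rpow_mul hn fun y hy =>
      hcT.trans_lt (by simpa [dist_comm] using hy.2)).trans ?_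
    gcongr
    exact lintegral_mono_set Set.sdiff_subset
  have hfar := setLIntegral_closedBall_diff_diff_dilate_cube_le (μ := μ) hn hc hκ hμ hrR
    (hRQ (mem_closedBall_self hrR.le)) hS (hTS (center_mem_cube cT hℓT.le)) hM hcT
  have hcover : D ⊆ (near ∪ mid) ∪ D \ cube cS (c * ℓS) := by
    intro y hy
    by_cases hnear : y ∈ closedBall xR (M * rR)
    · exact Or.inl (Or.inl ⟨hnear, hy.2⟩)
    by_cases hS' : y ∈ cube cS (c * ℓS)
    · have hfar : M * rR < dist xR y := by simpa [dist_comm] using hnear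
      exact Or.inl (Or.inr ⟨⟨hS', hfarT y hfar⟩, hnear⟩)
    · exact Or.inr ⟨hy, hS'⟩
  calc ballDelta μ n c xR rR xQ rQ = 1 + ∫⁻ y in D, ENNReal.ofReal (1 / dist xR y ^ n) ∂μ := rfl
    _ ≤ 1 + (ENNReal.ofReal ((2 * M / c) ^ n) + ENNReal.ofReal (2 ^ n) * J +
          ENNReal.ofReal ((4 * κ * (M + 1) * (c + 1)) ^ n)) := by
        gcongr
        refine (lintegral_mono_set hcover).trans ((lintegral_union_le _ _ _).trans ?_)
        gcongr
        exact (lintegral_union_le _ _ _).trans (add_le_add hnear hmid)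
    _ ≤ ballCubeConst d n c κ * cubeDelta μ n c cT ℓT cS ℓS := ENNReal.one_add_add_add_mul_le

end Configuration

/-- inequality (3) in the paper: for balls `B_R ⊆ B_Q` and cubes
`T ⊆ S` with `ℓ(S)` comparable to `r(B_Q)` and `S` meeting `B_Q`, and `ℓ(T)` comparable
to `r(B_R)` and `T` meeting `B_R`, one has `δ(B_R, B_Q) ≤ C (1 + δ(T,S))`, with `C`
depending only on the comparability constant `κ`, `n`, `d` and the dilation constant
`c ≥ 2`. -/
theorem delta_ball_pair_controlled_by_cube_pair (d : ℕ) (n : ℝ) (hn : 0 < n)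
    (c : ℝ) (hc : 2 ≤ c) (κ : ℝ) (hκ : 1 ≤ κ) :
    ∃ C : ℝ≥0∞, 0 < C ∧ C ≠ ⊤ ∧
      ∀ μ : Measure (EuclideanSpace ℝ (Fin d)),
        (∀ x ∈ {x : EuclideanSpace ℝ (Fin d) | ∀ ρ > 0, 0 < μ (ball x ρ)},
          ∀ r > 0, μ (ball x r) ≤ ENNReal.ofReal (r ^ n)) →
        ∀ (xR xQ cT cS : EuclideanSpace ℝ (Fin d)) (rR rQ ℓT ℓS : ℝ),
          0 < rR →
          xR ∈ {x : EuclideanSpace ℝ (Fin d) | ∀ ρ > 0, 0 < μ (ball x ρ)} →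
          closedBall xR rR ⊆ closedBall xQ rQ →
          rQ / κ ≤ ℓS → ℓS ≤ κ * rQ →
          (closedBall xQ rQ ∩ cube cS ℓS).Nonempty →
          rR / κ ≤ ℓT → ℓT ≤ κ * rR →
          (cube cT ℓT ∩ closedBall xR rR).Nonempty →
          cube cT ℓT ⊆ cube cS ℓS →
          ballDelta μ n c xR rR xQ rQ ≤ C * (1 + cubeDelta μ n c cT ℓT cS ℓS) := by
  refine ⟨ballCubeConst d n c κ, by unfold ballCubeConst; positivity,
    by simp [ballCubeConst], ?_⟩
  intro μ hμ xR xQ cT cS rR rQ ℓT ℓS hrR hxR hRQ hS _ _ hT₁ hT₂ hTR hTS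
  calc ballDelta μ n c xR rR xQ rQ ≤ ballCubeConst d n c κ * cubeDelta μ n c cT ℓT cS ℓS :=
        ballDelta_le_ballCubeConst_mul_cubeDelta hn.le hc (one_pos.trans_le hκ) (hμ xR hxR) hrR
          hRQ hS hT₁ hT₂ hTR hTS
    _ ≤ ballCubeConst d n c κ * (1 + cubeDelta μ n c cT ℓT cS ℓS) := by gcongr; exact le_add_self
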